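/- arXiv:2102.05255 — 5 statements merged into one kernel-verified Lean document; each statement's English description precedes it below -/
import Mathlib

section
/- Let U, V be bounded linear operators on a Hilbert space H. If the range of U is contained in the range of V, then there exists λ > 0 such that U U* ≤ λ² V V* (as positive operators). -/
/-!
Douglas' factorization. `V` is injective on `(ker V)ᗮ` and maps it onto `range V`, so the range
inclusion lets one lift `U` through `V` to a linear map `T` with values in `(ker V)ᗮ`; its graph
is closed, so `T` is bounded and `U = V T`. Then `U U* = V (T T*) V* ≤ ‖T‖² V V*`, because
`T T* ≤ ‖T‖²`.
-/

open scoped Pointwise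

noncomputable section

namespace ContinuousLinearMap

section Factorization

variable {𝕜 E F G : Type*} [RCLike 𝕜]
  [NormedAddCommGroup E] [InnerProductSpace 𝕜 E] [NormedAddCommGroup F] [NormedSpace 𝕜 F]

theorem injOn_orthogonal_ker (V : E →L[𝕜] F) : Set.InjOn V (V.kerᗮ : Set E) := by
  intro a ha b hb hab
  have hmem : a - b ∈ V.ker ⊓ V.kerᗮ :=
    ⟨by simp [LinearMap.mem_ker, hab], V.kerᗮ.sub_mem ha hb⟩
  rw [Submodule.inf_orthogonal_eq_bot, Submodule.mem_bot] at hmem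
  exact sub_eq_zero.mp hmem

theorem exists_mem_orthogonal_ker_apply_eq [CompleteSpace E] (V : E →L[𝕜] F) (y : E) :
    ∃ x ∈ V.kerᗮ, V x = V y := by
  have : CompleteSpace V.ker := V.isClosed_ker.completeSpace_coe
  refine ⟨y - V.ker.starProjection y, V.ker.sub_starProjection_mem_orthogonal y, ?_⟩
  have hproj : V (V.ker.starProjection y) = 0 := V.ker.starProjection_apply_mem y
  rw [map_sub, hproj, sub_zero]

variable [NormedAddCommGroup G] [NormedSpace 𝕜 G]

theorem exists_linearMap_lift_of_range_subset [CompleteSpace E] {U : G →L[𝕜] F}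
    {V : E →L[𝕜] F} (h : Set.range U ⊆ Set.range V) :
    ∃ T : G →ₗ[𝕜] E, (∀ x, T x ∈ V.kerᗮ) ∧ ∀ x, V (T x) = U x := by
  let W : V.kerᗮ →ₗ[𝕜] F := (V : E →ₗ[𝕜] F).domRestrict V.kerᗮ
  have hW : Function.Injective W := fun a b hab =>
    Subtype.ext (V.injOn_orthogonal_ker a.2 b.2 hab)
  have hUW (x : G) : U x ∈ LinearMap.range W := by
    obtain ⟨y, hy⟩ := h ⟨x, rfl⟩
    obtain ⟨z, hz, hzy⟩ := V.exists_mem_orthogonal_ker_apply_eq y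
    exact ⟨⟨z, hz⟩, hzy.trans hy⟩
  refine ⟨V.kerᗮ.subtype ∘ₗ (LinearEquiv.ofInjective W hW).symm ∘ₗ
    (U : G →ₗ[𝕜] F).codRestrict _ hUW, fun x => Subtype.prop _, fun x => ?_⟩
  exact LinearEquiv.ofInjective_symm_apply W (h := hW) ⟨U x, hUW x⟩

theorem exists_comp_eq_of_range_subset [CompleteSpace E] [CompleteSpace G] {U : G →L[𝕜] F}
    {V : E →L[𝕜] F} (h : Set.range U ⊆ Set.range V) : ∃ T : G →L[𝕜] E, V ∘L T = U := by
  obtain ⟨T, hTK, hVT⟩ := exists_linearMap_lift_of_range_subset h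
  have hT : Continuous T := by
    refine T.continuous_of_seq_closed_graph fun u x y hux huy => ?_
    have hyK : y ∈ V.kerᗮ :=
      (Submodule.isClosed_orthogonal _).mem_of_tendsto huy (.of_forall fun n => hTK (u n))
    have hVy : V y = U x := by
      refine tendsto_nhds_unique ((V.continuous.tendsto y).comp huy) ?_
      simpa [Function.comp_def, hVT] using (U.continuous.tendsto x).comp hux
    exact V.injOn_orthogonal_ker hyK (hTK x) (hVy.trans (hVT x).symm)
  exact ⟨⟨T, hT⟩, ext hVT⟩

end Factorization

section Positivity

variable {𝕜 E F G : Type*} [RCLike 𝕜]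
  [NormedAddCommGroup E] [InnerProductSpace 𝕜 E] [CompleteSpace E]
  [NormedAddCommGroup F] [InnerProductSpace 𝕜 F] [CompleteSpace F]
  [NormedAddCommGroup G] [InnerProductSpace 𝕜 G] [CompleteSpace G]

theorem isPositive_sq_smul_one_sub_comp_adjoint (T : G →L[𝕜] E) {c : ℝ} (hc : ‖T‖ ≤ c) :
    ((c : 𝕜) ^ 2 • (1 : E →L[𝕜] E) - T ∘L adjoint T).IsPositive := by
  refine isPositive_def'.mpr ⟨?_, fun x => ?_⟩
  · refine IsSelfAdjoint.sub ?_ (isPositive_self_comp_adjoint T).isSelfAdjoint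
    exact IsSelfAdjoint.smul (by simp [IsSelfAdjoint, ← map_pow]) (IsSelfAdjoint.one _)
  · have hTx : ‖adjoint T x‖ ≤ c * ‖x‖ :=
      calc ‖adjoint T x‖ ≤ ‖adjoint T‖ * ‖x‖ := le_opNorm _ _
        _ = ‖T‖ * ‖x‖ := by rw [LinearIsometryEquiv.norm_map]
        _ ≤ c * ‖x‖ := by gcongr
    have hre : ((c : 𝕜) ^ 2 • (1 : E →L[𝕜] E) - T ∘L adjoint T).reApplyInnerSelf x
        = c ^ 2 * ‖x‖ ^ 2 - ‖adjoint T x‖ ^ 2 := by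
      simp [reApplyInnerSelf_apply, inner_sub_left, inner_smul_left, ← adjoint_inner_right]
    rw [hre, sub_nonneg]
    calc ‖adjoint T x‖ ^ 2 ≤ (c * ‖x‖) ^ 2 := by gcongr
      _ = c ^ 2 * ‖x‖ ^ 2 := mul_pow _ _ _

theorem isPositive_sq_smul_comp_adjoint_sub_of_comp_eq {U : G →L[𝕜] F} {V : E →L[𝕜] F}
    {T : G →L[𝕜] E} (hVT : V ∘L T = U) {c : ℝ} (hc : ‖T‖ ≤ c) :
    ((c : 𝕜) ^ 2 • (V ∘L adjoint V) - U ∘L adjoint U).IsPositive := by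
  convert (isPositive_sq_smul_one_sub_comp_adjoint T hc).conj_adjoint V using 1
  simp [← hVT, adjoint_comp, comp_sub, sub_comp, comp_assoc, one_def]

end Positivity

end ContinuousLinearMap

variable {H : Type*} [NormedAddCommGroup H] [InnerProductSpace ℂ H] [CompleteSpace H]

theorem stmt0 (U V : H →L[ℂ] H) (h : Set.range U ⊆ Set.range V) :
    ∃ c : ℝ, 0 < c ∧
      ((c ^ 2 : ℂ) • (V ∘L ContinuousLinearMap.adjoint V)
        - U ∘L ContinuousLinearMap.adjoint U).IsPositive := by
  obtain ⟨T, hVT⟩ := ContinuousLinearMap.exists_comp_eq_of_range_subset h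
  refine ⟨‖T‖ + 1, by positivity, ?_⟩
  exact ContinuousLinearMap.isPositive_sq_smul_comp_adjoint_sub_of_comp_eq hVT (lt_add_one _).le
end
end

section
/- Let U, V be bounded linear operators on a Hilbert space H. If U U* ≤ λ² V V* for some λ > 0, then there exists a bounded operator W on H with ‖W‖ ≤ λ such that U = V W. -/
/-!
Let `D₀` be the map `V* x ↦ U* x` on the range of `V*`. The positivity hypothesis says
`‖U* x‖ ≤ c ‖V* x‖`, so `D₀` is well defined and `c`-bounded; it extends to the closure of the
range and, composed with the orthogonal projection onto that closure, gives `D` with `‖D‖ ≤ c`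
and `D V* = U*`. Then `W = D*` satisfies `V W = (D V*)* = U`.
-/

open scoped Pointwise

noncomputable section

variable {H : Type*} [NormedAddCommGroup H] [InnerProductSpace ℂ H] [CompleteSpace H]

open ContinuousLinearMap RCLike

section

variable {𝕜 E F G : Type*} [RCLike 𝕜]

theorem LinearMap.exists_opNorm_le_apply_eq_of_norm_le [AddCommGroup E] [Module 𝕜 E]
    [NormedAddCommGroup F] [InnerProductSpace 𝕜 F] [CompleteSpace F]
    [NormedAddCommGroup G] [NormedSpace 𝕜 G] [CompleteSpace G]
    (A : E →ₗ[𝕜] F) (B : E →ₗ[𝕜] G) {c : ℝ} (hc : 0 ≤ c) (h : ∀ x, ‖B x‖ ≤ c * ‖A x‖) :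
    ∃ D : F →L[𝕜] G, ‖D‖ ≤ c ∧ ∀ x, D (A x) = B x := by
  set K := (LinearMap.range A).topologicalClosure
  let e : E →ₗ[𝕜] K := A.codRestrict K fun x ↦
    (LinearMap.range A).le_topologicalClosure (LinearMap.mem_range_self A x)
  have he : DenseRange e := by
    rw [DenseRange, Subtype.dense_iff, ← Set.range_comp]
    exact (LinearMap.range A).topologicalClosure_coe.subset
  have hB : ∀ x, ‖B x‖ ≤ c * ‖e x‖ := h
  refine ⟨B.extendOfNorm e ∘L K.orthogonalProjectionOnto, ?_, fun x ↦ ?_⟩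
  · calc ‖B.extendOfNorm e ∘L K.orthogonalProjectionOnto‖
        ≤ ‖B.extendOfNorm e‖ * ‖K.orthogonalProjectionOnto‖ := opNorm_comp_le _ _
      _ ≤ c * 1 := by
        gcongr
        exacts [LinearMap.opNorm_extendOfNorm_le he hc hB, K.orthogonalProjectionOnto_norm_le]
      _ = c := mul_one c
  · have hAx : A x = (e x : F) := rfl
    rw [ContinuousLinearMap.comp_apply, hAx, K.orthogonalProjectionOnto_mem_subspace_eq_self,
      LinearMap.extendOfNorm_eq he ⟨c, hB⟩]

variable [NormedAddCommGroup E] [InnerProductSpace 𝕜 E] [CompleteSpace E]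
  [NormedAddCommGroup F] [InnerProductSpace 𝕜 F] [CompleteSpace F]

theorem ContinuousLinearMap.norm_adjoint_apply_sq (T : E →L[𝕜] F) (x : F) :
    ‖adjoint T x‖ ^ 2 = re (inner 𝕜 ((T ∘L adjoint T) x) x) := by
  simpa using apply_norm_sq_eq_inner_adjoint_left (adjoint T) x

theorem ContinuousLinearMap.norm_adjoint_apply_le_of_isPositive {T S : E →L[𝕜] F} {c : ℝ}
    (hc : 0 ≤ c) (h : (((c : 𝕜) ^ 2) • (S ∘L adjoint S) - T ∘L adjoint T).IsPositive) (x : F) :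
    ‖adjoint T x‖ ≤ c * ‖adjoint S x‖ := by
  have hre := h.re_inner_nonneg_left x
  rw [sub_apply, inner_sub_left, smul_apply, inner_smul_left, ← ofReal_pow, conj_ofReal, map_sub,
    re_ofReal_mul, ← norm_adjoint_apply_sq, ← norm_adjoint_apply_sq] at hre
  refine le_of_pow_le_pow_left₀ two_ne_zero (by positivity) ?_
  linarith [mul_pow c ‖adjoint S x‖ 2]

end

theorem stmt1 (U V : H →L[ℂ] H) (c : ℝ) (hc : 0 < c)
    (h : ((c ^ 2 : ℂ) • (V ∘L ContinuousLinearMap.adjoint V)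
        - U ∘L ContinuousLinearMap.adjoint U).IsPositive) :
    ∃ W : H →L[ℂ] H, ‖W‖ ≤ c ∧ U = V ∘L W := by
  obtain ⟨D, hD, hDV⟩ := LinearMap.exists_opNorm_le_apply_eq_of_norm_le
    (adjoint V : H →ₗ[ℂ] H) (adjoint U : H →ₗ[ℂ] H) hc.le
    (norm_adjoint_apply_le_of_isPositive hc.le h)
  refine ⟨adjoint D, (LinearIsometryEquiv.norm_map adjoint D).trans_le hD, ?_⟩
  have hDV' : D ∘L adjoint V = adjoint U := ext hDV
  simpa [adjoint_comp] using (congrArg adjoint hDV').symm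
end
end

section
/- Let K have closed range with pseudo-inverse K†, and let (f_i) be a K-frame for H with bounds A, B. Then for every f in the range of K, A‖K†‖^{-2}‖f‖² ≤ ⟨S f, f⟩ ≤ B‖f‖², where S is the frame operator S f = Σ_i ⟨f, f_i⟩ f_i. -/
/-! If `K (K† g) = g`, then `‖g‖² = ⟪K† g, K* g⟫ ≤ ‖K†‖ ‖g‖ ‖K* g‖`, so `‖g‖ ≤ ‖K†‖ ‖K* g‖` on the
range of `K`. Feeding this into the lower `K`-frame bound `A ‖K* g‖² ≤ ∑ |⟪g, f_i⟫|² = ⟪S g, g⟫`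
gives the lower estimate; the upper one is the upper frame bound. -/

open scoped Pointwise

noncomputable section

variable {H : Type*} [NormedAddCommGroup H] [InnerProductSpace ℂ H] [CompleteSpace H]

namespace ContinuousLinearMap

variable {𝕜 E F : Type*} [RCLike 𝕜] [NormedAddCommGroup E] [NormedAddCommGroup F]
  [InnerProductSpace 𝕜 E] [InnerProductSpace 𝕜 F] [CompleteSpace E] [CompleteSpace F]

theorem norm_le_opNorm_mul_norm_adjoint_of_apply_eq {K : E →L[𝕜] F} {L : F →L[𝕜] E} {g : F}
    (hg : K (L g) = g) : ‖g‖ ≤ ‖L‖ * ‖adjoint K g‖ := by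
  have hsq : ‖g‖ * ‖g‖ ≤ ‖L‖ * ‖adjoint K g‖ * ‖g‖ :=
    calc ‖g‖ * ‖g‖ = ‖(inner 𝕜 (L g) (adjoint K g) : 𝕜)‖ := by
          rw [adjoint_inner_right, hg, inner_self_eq_norm_sq_to_K, norm_pow, RCLike.norm_ofReal,
            abs_norm, sq]
      _ ≤ ‖L g‖ * ‖adjoint K g‖ := norm_inner_le_norm _ _
      _ ≤ ‖L‖ * ‖g‖ * ‖adjoint K g‖ := by gcongr; exact L.le_opNorm g
      _ = ‖L‖ * ‖adjoint K g‖ * ‖g‖ := by ring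
  rcases (norm_nonneg g).eq_or_lt with hzero | hpos
  · rw [← hzero]
    positivity
  · exact le_of_mul_le_mul_right hsq hpos

theorem inv_sq_opNorm_mul_sq_le_norm_adjoint_sq {K : E →L[𝕜] F} {L : F →L[𝕜] E} {g : F}
    (hg : K (L g) = g) : (‖L‖ ^ 2)⁻¹ * ‖g‖ ^ 2 ≤ ‖adjoint K g‖ ^ 2 := by
  refine inv_mul_le_of_le_mul₀ (by positivity) (by positivity) ?_
  rw [← mul_pow]
  gcongr
  exact norm_le_opNorm_mul_norm_adjoint_of_apply_eq hg

end ContinuousLinearMap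

theorem stmt5_general (K Kd S : H →L[ℂ] H) (f : ℕ → H) (A B : ℝ) (hA : 0 < A)
    (hKd : ∀ x ∈ Set.range K, K (Kd x) = x)
    (hframe : ∀ g : H,
      A * ‖ContinuousLinearMap.adjoint K g‖ ^ 2 ≤ ∑' i, ‖(inner ℂ g (f i) : ℂ)‖ ^ 2 ∧
      ∑' i, ‖(inner ℂ g (f i) : ℂ)‖ ^ 2 ≤ B * ‖g‖ ^ 2)
    (hS : ∀ g : H, (inner ℂ (S g) g : ℂ) = ((∑' i, ‖(inner ℂ g (f i) : ℂ)‖ ^ 2 : ℝ) : ℂ)) :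
    ∀ g ∈ Set.range K,
      A * (‖Kd‖ ^ 2)⁻¹ * ‖g‖ ^ 2 ≤ (inner ℂ (S g) g : ℂ).re ∧
      (inner ℂ (S g) g : ℂ).re ≤ B * ‖g‖ ^ 2 := by
  intro g hg
  rw [hS g, Complex.ofReal_re]
  refine ⟨?_, (hframe g).2⟩
  calc A * (‖Kd‖ ^ 2)⁻¹ * ‖g‖ ^ 2 = A * ((‖Kd‖ ^ 2)⁻¹ * ‖g‖ ^ 2) := mul_assoc _ _ _
    _ ≤ A * ‖ContinuousLinearMap.adjoint K g‖ ^ 2 := by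
        gcongr
        exact ContinuousLinearMap.inv_sq_opNorm_mul_sq_le_norm_adjoint_sq (hKd g hg)
    _ ≤ _ := (hframe g).1

theorem stmt5 (K Kd S : H →L[ℂ] H) (f : ℕ → H) (A B : ℝ) (hA : 0 < A) (hAB : A ≤ B)
    (hclosed : IsClosed (Set.range K))
    (hKd : ∀ x ∈ Set.range K, K (Kd x) = x)
    (hframe : ∀ g : H,
      A * ‖ContinuousLinearMap.adjoint K g‖ ^ 2 ≤ ∑' i, ‖(inner ℂ g (f i) : ℂ)‖ ^ 2 ∧
      ∑' i, ‖(inner ℂ g (f i) : ℂ)‖ ^ 2 ≤ B * ‖g‖ ^ 2)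
    (hS : ∀ g : H, (inner ℂ (S g) g : ℂ) = ((∑' i, ‖(inner ℂ g (f i) : ℂ)‖ ^ 2 : ℝ) : ℂ)) :
    ∀ g ∈ Set.range K,
      A * (‖Kd‖ ^ 2)⁻¹ * ‖g‖ ^ 2 ≤ (inner ℂ (S g) g : ℂ).re ∧
      (inner ℂ (S g) g : ℂ).re ≤ B * ‖g‖ ^ 2 :=
  stmt5_general K Kd S f A B hA hKd hframe hS
end
end

section
/- Let (f_i) be a K-frame for a Hilbert space H with bounds A, B, and let T be a co-isometry (T T* = I) on H with TK = KT. Then (T f_i) is a K-frame for H with lower bound A and upper bound B‖T‖². -/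
/-!
Since `⟪g, T fᵢ⟫ = ⟪T* g, fᵢ⟫`, both bounds come from the frame inequalities at `T* g`.
Upper: `‖T* g‖ ≤ ‖T‖ ‖g‖`. Lower: `T T* = I` makes `T*` an isometry, and `TK = KT` gives
`K* T* = T* K*`, so `‖K* (T* g)‖ = ‖T* (K* g)‖ = ‖K* g‖`.
-/

open scoped Pointwise

noncomputable section

variable {H : Type*} [NormedAddCommGroup H] [InnerProductSpace ℂ H] [CompleteSpace H]

namespace ContinuousLinearMap

open scoped InnerProductSpace

variable {𝕜 E F ι : Type*} [RCLike 𝕜]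
  [NormedAddCommGroup E] [InnerProductSpace 𝕜 E] [CompleteSpace E]
  [NormedAddCommGroup F] [InnerProductSpace 𝕜 F] [CompleteSpace F]

theorem norm_adjoint_apply_of_comp_adjoint_eq_one {T : E →L[𝕜] F} (hT : T ∘L adjoint T = 1)
    (y : F) : ‖adjoint T y‖ = ‖y‖ :=
  (adjoint T).norm_map_iff_adjoint_comp_self.mpr (by rwa [adjoint_adjoint]) y

theorem tsum_norm_inner_apply_sq (T : E →L[𝕜] F) (f : ι → E) (g : F) :
    ∑' i, ‖⟪g, T (f i)⟫_𝕜‖ ^ 2 = ∑' i, ‖⟪adjoint T g, f i⟫_𝕜‖ ^ 2 := by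
  simp_rw [adjoint_inner_left]

theorem tsum_norm_inner_apply_sq_le {B : ℝ} (hB : 0 ≤ B) (T : E →L[𝕜] F) {f : ι → E}
    (hf : ∀ g : E, ∑' i, ‖⟪g, f i⟫_𝕜‖ ^ 2 ≤ B * ‖g‖ ^ 2) (g : F) :
    ∑' i, ‖⟪g, T (f i)⟫_𝕜‖ ^ 2 ≤ B * ‖T‖ ^ 2 * ‖g‖ ^ 2 :=
  calc ∑' i, ‖⟪g, T (f i)⟫_𝕜‖ ^ 2 = ∑' i, ‖⟪adjoint T g, f i⟫_𝕜‖ ^ 2 :=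
        tsum_norm_inner_apply_sq T f g
    _ ≤ B * ‖adjoint T g‖ ^ 2 := hf _
    _ ≤ B * (‖T‖ * ‖g‖) ^ 2 := by
        gcongr
        exact ((adjoint T).le_opNorm g).trans_eq (by rw [LinearIsometryEquiv.norm_map])
    _ = B * ‖T‖ ^ 2 * ‖g‖ ^ 2 := by ring

theorem le_tsum_norm_inner_apply_sq {A : ℝ} {K T : E →L[𝕜] E} (hT : T ∘L adjoint T = 1)
    (hTK : T ∘L K = K ∘L T) {f : ι → E}
    (hf : ∀ g : E, A * ‖adjoint K g‖ ^ 2 ≤ ∑' i, ‖⟪g, f i⟫_𝕜‖ ^ 2) (g : E) :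
    A * ‖adjoint K g‖ ^ 2 ≤ ∑' i, ‖⟪g, T (f i)⟫_𝕜‖ ^ 2 := by
  have hKT : adjoint K (adjoint T g) = adjoint T (adjoint K g) :=
    DFunLike.congr_fun (Commute.star_star (x := T) (y := K) hTK).eq.symm g
  rw [tsum_norm_inner_apply_sq, ← norm_adjoint_apply_of_comp_adjoint_eq_one hT (adjoint K g),
    ← hKT]
  exact hf _

end ContinuousLinearMap

theorem stmt7 (K T : H →L[ℂ] H) (f : ℕ → H) (A B : ℝ) (hA : 0 < A) (hAB : A ≤ B)
    (hco : T ∘L ContinuousLinearMap.adjoint T = 1)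
    (hcomm : T ∘L K = K ∘L T)
    (hframe : ∀ g : H,
      A * ‖ContinuousLinearMap.adjoint K g‖ ^ 2 ≤ ∑' i, ‖(inner ℂ g (f i) : ℂ)‖ ^ 2 ∧
      ∑' i, ‖(inner ℂ g (f i) : ℂ)‖ ^ 2 ≤ B * ‖g‖ ^ 2) :
    ∀ g : H,
      A * ‖ContinuousLinearMap.adjoint K g‖ ^ 2 ≤ ∑' i, ‖(inner ℂ g (T (f i)) : ℂ)‖ ^ 2 ∧
      ∑' i, ‖(inner ℂ g (T (f i)) : ℂ)‖ ^ 2 ≤ B * ‖T‖ ^ 2 * ‖g‖ ^ 2 := fun g =>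
  ⟨ContinuousLinearMap.le_tsum_norm_inner_apply_sq hco hcomm (fun g => (hframe g).1) g,
    ContinuousLinearMap.tsum_norm_inner_apply_sq_le (hA.trans_le hAB).le T
      (fun g => (hframe g).2) g⟩
end
end

section
/- Let (f_i) and (g_i) be K-frames for a Hilbert space H with synthesis operators T, L : ℓ²(ℕ) → H (so T e_i = f_i, L e_i = g_i). If T L* and L T* are positive operators, then (f_i + g_i) is a K-frame for H: there exists λ > 0 with (1/λ²)‖K* f‖² ≤ Σ_i |⟨f, f_i + g_i⟩|² ≤ (√A + √B)² ‖f‖² for all f ∈ H, where A, B are upper Bessel bounds of (f_i), (g_i). -/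
/-! The frame sum of a sequence `M eᵢ` at `x` is `‖M* x‖²`, so the sums for `(fᵢ)`, `(gᵢ)` and
`(fᵢ + gᵢ)` are `‖T* x‖²`, `‖L* x‖²` and `‖T* x + L* x‖²`. Positivity of `T L*` says exactly that
`re ⟪T* x, L* x⟫ ≥ 0`, so the cross term in `‖T* x + L* x‖²` can only help: the lower `K`-frame bound
of `(fᵢ)` carries over. The upper bound is the triangle inequality. -/

open scoped Pointwise

noncomputable section

variable {H : Type*} [NormedAddCommGroup H] [InnerProductSpace ℂ H] [CompleteSpace H]

local notation "ℓ²" => lp (fun _ : ℕ => ℂ) 2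

open ContinuousLinearMap RCLike

section

variable {ι 𝕜 E : Type*} [RCLike 𝕜] [NormedAddCommGroup E] [InnerProductSpace 𝕜 E] [CompleteSpace E]

theorem tsum_norm_inner_apply_single_sq [DecidableEq ι] (M : lp (fun _ : ι => 𝕜) 2 →L[𝕜] E) (x : E) :
    ∑' i, ‖(inner 𝕜 x (M (lp.single 2 i 1)) : 𝕜)‖ ^ 2 = ‖adjoint M x‖ ^ 2 := by
  have hcoord (i : ι) : ‖(inner 𝕜 x (M (lp.single 2 i 1)) : 𝕜)‖ = ‖adjoint M x i‖ := by
    rw [← adjoint_inner_left, lp.inner_single_right, inner_apply, one_mul, norm_conj]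
  simpa only [hcoord, ENNReal.toReal_ofNat, Real.rpow_two] using
    (lp.norm_rpow_eq_tsum (p := 2) (by norm_num) (adjoint M x)).symm

theorem re_inner_adjoint_apply_nonneg {F : Type*} [NormedAddCommGroup F] [InnerProductSpace 𝕜 F]
    [CompleteSpace F] {S T : F →L[𝕜] E} (hST : (S ∘L adjoint T).IsPositive) (x : E) :
    0 ≤ re (inner 𝕜 (adjoint S x) (adjoint T x)) := by
  rw [adjoint_inner_left]
  exact hST.re_inner_nonneg_right x

end

theorem norm_sq_le_norm_add_sq_of_re_inner_nonneg {𝕜 E : Type*} [RCLike 𝕜] [NormedAddCommGroup E]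
    [InnerProductSpace 𝕜 E] {u v : E} (huv : 0 ≤ re (inner 𝕜 u v)) :
    ‖u‖ ^ 2 ≤ ‖u + v‖ ^ 2 := by
  rw [norm_add_sq (𝕜 := 𝕜)]
  nlinarith [sq_nonneg ‖v‖]

theorem norm_add_sq_le_of_norm_sq_le {E : Type*} [SeminormedAddCommGroup E] {u v : E} {A B c : ℝ}
    (hc : 0 ≤ c) (hu : ‖u‖ ^ 2 ≤ A * c ^ 2) (hv : ‖v‖ ^ 2 ≤ B * c ^ 2) :
    ‖u + v‖ ^ 2 ≤ (√A + √B) ^ 2 * c ^ 2 := by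
  have hsqrt {w : E} {D : ℝ} (hw : ‖w‖ ^ 2 ≤ D * c ^ 2) : ‖w‖ ≤ √D * c := by
    rw [← Real.sqrt_sq (norm_nonneg w), ← Real.sqrt_sq hc, ← Real.sqrt_mul' _ (sq_nonneg c)]
    exact Real.sqrt_le_sqrt hw
  rw [← mul_pow]
  gcongr
  calc ‖u + v‖ ≤ ‖u‖ + ‖v‖ := norm_add_le u v
    _ ≤ √A * c + √B * c := add_le_add (hsqrt hu) (hsqrt hv)
    _ = (√A + √B) * c := by ring

theorem stmt11_general (K : H →L[ℂ] H) (f g : ℕ → H) (T L : ℓ² →L[ℂ] H) (A B : ℝ)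
    (hT : ∀ i : ℕ, f i = T (lp.single 2 i (1 : ℂ)))
    (hL : ∀ i : ℕ, g i = L (lp.single 2 i (1 : ℂ)))
    (hKf : ∃ C : ℝ, 0 < C ∧ ∀ x : H,
        C * ‖ContinuousLinearMap.adjoint K x‖ ^ 2 ≤ ∑' i, ‖(inner ℂ x (f i) : ℂ)‖ ^ 2)
    (hA : ∀ x : H, ∑' i, ‖(inner ℂ x (f i) : ℂ)‖ ^ 2 ≤ A * ‖x‖ ^ 2)
    (hB : ∀ x : H, ∑' i, ‖(inner ℂ x (g i) : ℂ)‖ ^ 2 ≤ B * ‖x‖ ^ 2)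
    (hpos1 : (T ∘L ContinuousLinearMap.adjoint L).IsPositive) :
    ∃ lam : ℝ, 0 < lam ∧ ∀ x : H,
      (1 / lam ^ 2) * ‖ContinuousLinearMap.adjoint K x‖ ^ 2
        ≤ ∑' i, ‖(inner ℂ x (f i + g i) : ℂ)‖ ^ 2 ∧
      ∑' i, ‖(inner ℂ x (f i + g i) : ℂ)‖ ^ 2
        ≤ (Real.sqrt A + Real.sqrt B) ^ 2 * ‖x‖ ^ 2 := by
  obtain ⟨C, hC, hCf⟩ := hKf
  have hf (x : H) : ∑' i, ‖(inner ℂ x (f i) : ℂ)‖ ^ 2 = ‖adjoint T x‖ ^ 2 := by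
    simp only [hT, tsum_norm_inner_apply_single_sq]
  have hg (x : H) : ∑' i, ‖(inner ℂ x (g i) : ℂ)‖ ^ 2 = ‖adjoint L x‖ ^ 2 := by
    simp only [hL, tsum_norm_inner_apply_single_sq]
  have hfg (x : H) :
      ∑' i, ‖(inner ℂ x (f i + g i) : ℂ)‖ ^ 2 = ‖adjoint T x + adjoint L x‖ ^ 2 := by
    simp only [hT, hL, ← add_apply, tsum_norm_inner_apply_single_sq, map_add]
  refine ⟨1 / √C, by positivity, fun x => ⟨?_, ?_⟩⟩
  · rw [div_pow, one_pow, Real.sq_sqrt hC.le, one_div_one_div, hfg]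
    calc C * ‖adjoint K x‖ ^ 2 ≤ ‖adjoint T x‖ ^ 2 := hf x ▸ hCf x
      _ ≤ _ := norm_sq_le_norm_add_sq_of_re_inner_nonneg (re_inner_adjoint_apply_nonneg hpos1 x)
  · rw [hfg]
    exact norm_add_sq_le_of_norm_sq_le (norm_nonneg x) (hf x ▸ hA x) (hg x ▸ hB x)

theorem stmt11 (K : H →L[ℂ] H) (f g : ℕ → H) (T L : ℓ² →L[ℂ] H) (A B : ℝ)
    (hT : ∀ i : ℕ, f i = T (lp.single 2 i (1 : ℂ)))
    (hL : ∀ i : ℕ, g i = L (lp.single 2 i (1 : ℂ)))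
    (hKf : ∃ C : ℝ, 0 < C ∧ ∀ x : H,
        C * ‖ContinuousLinearMap.adjoint K x‖ ^ 2 ≤ ∑' i, ‖(inner ℂ x (f i) : ℂ)‖ ^ 2)
    (hKg : ∃ C : ℝ, 0 < C ∧ ∀ x : H,
        C * ‖ContinuousLinearMap.adjoint K x‖ ^ 2 ≤ ∑' i, ‖(inner ℂ x (g i) : ℂ)‖ ^ 2)
    (hA : ∀ x : H, ∑' i, ‖(inner ℂ x (f i) : ℂ)‖ ^ 2 ≤ A * ‖x‖ ^ 2)
    (hB : ∀ x : H, ∑' i, ‖(inner ℂ x (g i) : ℂ)‖ ^ 2 ≤ B * ‖x‖ ^ 2)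
    (hpos1 : (T ∘L ContinuousLinearMap.adjoint L).IsPositive)
    (hpos2 : (L ∘L ContinuousLinearMap.adjoint T).IsPositive) :
    ∃ lam : ℝ, 0 < lam ∧ ∀ x : H,
      (1 / lam ^ 2) * ‖ContinuousLinearMap.adjoint K x‖ ^ 2
        ≤ ∑' i, ‖(inner ℂ x (f i + g i) : ℂ)‖ ^ 2 ∧
      ∑' i, ‖(inner ℂ x (f i + g i) : ℂ)‖ ^ 2
        ≤ (Real.sqrt A + Real.sqrt B) ^ 2 * ‖x‖ ^ 2 :=
  stmt11_general K f g T L A B hT hL hKf hA hB hpos1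
end
end
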